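/- arXiv:1311.0509 — 10 statements merged into one kernel-verified Lean document; each statement's English description precedes it below -/
import Mathlib

section
/- Let γ be a 6×6 real symmetric matrix in block form with diagonal blocks λᵢ·I (λᵢ ≥ 1, i=1,2,3) and off-diagonal blocks D₁₂, D₁₃, D₂₃ which are 2×2 diagonal matrices, and let J₃ = J ⊕ J ⊕ J. Then γ J₃ γ = J₃ holds if and only if the six conditions hold: λ₁² + det D₁₂ + det D₁₃ = 1, λ₂² + det D₁₂ + det D₂₃ = 1, λ₃² + det D₁₃ + det D₂₃ = 1, λ₁ D₁₂ + λ₂ D̃₁₂ + D̃₁₃ ⊙ D₂₃ = 0, λ₁ D₁₃ + λ₃ D̃₁₃ + D̃₁₂ ⊙ D₂₃ = 0, λ₂ D₂₃ + λ₃ D̃₂₃ + D̃₁₂ ⊙ D₁₃ = 0. -/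
open Matrix

/-- The 2×2 standard symplectic form. -/
noncomputable def J2x2 : Matrix (Fin 2) (Fin 2) ℝ := !![0, -1; 1, 0]

/-- Pauli X matrix. -/
noncomputable def sigmaX : Matrix (Fin 2) (Fin 2) ℝ := !![0, 1; 1, 0]

/-- `D̃ = σ_x D σ_x`. -/
noncomputable def tildeM (D : Matrix (Fin 2) (Fin 2) ℝ) : Matrix (Fin 2) (Fin 2) ℝ :=
  sigmaX * D * sigmaX

/-- The 6×6 matrix with 2×2 diagonal blocks `λᵢ·I` and off-diagonal blocks
`D₁₂, D₁₃, D₂₃`, indexed by `Fin 3 × Fin 2` (mode, quadrature). -/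
noncomputable def threeModeCM (l₁ l₂ l₃ : ℝ) (D₁₂ D₁₃ D₂₃ : Matrix (Fin 2) (Fin 2) ℝ) :
    Matrix (Fin 3 × Fin 2) (Fin 3 × Fin 2) ℝ :=
  fun p q =>
    (![![l₁ • (1 : Matrix (Fin 2) (Fin 2) ℝ), D₁₂, D₁₃],
       ![D₁₂ᵀ, l₂ • 1, D₂₃],
       ![D₁₃ᵀ, D₂₃ᵀ, l₃ • 1]] p.1 q.1) p.2 q.2

/-- `J₃ = J ⊕ J ⊕ J` on the mode-ordered basis. -/
noncomputable def J₃ : Matrix (Fin 3 × Fin 2) (Fin 3 × Fin 2) ℝ :=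
  fun p q => if p.1 = q.1 then J2x2 p.2 q.2 else 0

lemma tildeM_eq (D : Matrix (Fin 2) (Fin 2) ℝ) :
    tildeM D = !![D 1 1, D 1 0; D 0 1, D 0 0] := by
  ext i j
  fin_cases i <;> fin_cases j <;>
    simp [tildeM, sigmaX, Matrix.mul_apply, Matrix.vecMul, dotProduct, Fin.sum_univ_succ]

set_option maxHeartbeats 4000000 in
theorem stmt_2 (l₁ l₂ l₃ : ℝ) (h₁ : 1 ≤ l₁) (h₂ : 1 ≤ l₂) (h₃ : 1 ≤ l₃)
    (D₁₂ D₁₃ D₂₃ : Matrix (Fin 2) (Fin 2) ℝ)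
    (hD₁₂ : D₁₂.IsDiag) (hD₁₃ : D₁₃.IsDiag) (hD₂₃ : D₂₃.IsDiag)
    (γ : Matrix (Fin 3 × Fin 2) (Fin 3 × Fin 2) ℝ)
    (hγ : γ = threeModeCM l₁ l₂ l₃ D₁₂ D₁₃ D₂₃) :
    γ * J₃ * γ = J₃ ↔
      (l₁ ^ 2 + D₁₂.det + D₁₃.det = 1 ∧
       l₂ ^ 2 + D₁₂.det + D₂₃.det = 1 ∧
       l₃ ^ 2 + D₁₃.det + D₂₃.det = 1 ∧
       l₁ • D₁₂ + l₂ • tildeM D₁₂ + Matrix.hadamard (tildeM D₁₃) D₂₃ = 0 ∧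
       l₁ • D₁₃ + l₃ • tildeM D₁₃ + Matrix.hadamard (tildeM D₁₂) D₂₃ = 0 ∧
       l₂ • D₂₃ + l₃ • tildeM D₂₃ + Matrix.hadamard (tildeM D₁₂) D₁₃ = 0) := by
  subst hγ
  have a0 : D₁₂ 0 1 = 0 := hD₁₂ (by decide)
  have a1 : D₁₂ 1 0 = 0 := hD₁₂ (by decide)
  have b0 : D₁₃ 0 1 = 0 := hD₁₃ (by decide)
  have b1 : D₁₃ 1 0 = 0 := hD₁₃ (by decide)
  have c0 : D₂₃ 0 1 = 0 := hD₂₃ (by decide)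
  have c1 : D₂₃ 1 0 = 0 := hD₂₃ (by decide)
  constructor
  · intro h
    have E1 := congrFun (congrFun h ((0:Fin 3),(0:Fin 2))) ((0:Fin 3),(1:Fin 2))
    have E2 := congrFun (congrFun h ((1:Fin 3),(0:Fin 2))) ((1:Fin 3),(1:Fin 2))
    have E3 := congrFun (congrFun h ((2:Fin 3),(0:Fin 2))) ((2:Fin 3),(1:Fin 2))
    have E4 := congrFun (congrFun h ((0:Fin 3),(1:Fin 2))) ((1:Fin 3),(0:Fin 2))
    have E5 := congrFun (congrFun h ((0:Fin 3),(0:Fin 2))) ((1:Fin 3),(1:Fin 2))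
    have E6 := congrFun (congrFun h ((0:Fin 3),(1:Fin 2))) ((2:Fin 3),(0:Fin 2))
    have E7 := congrFun (congrFun h ((0:Fin 3),(0:Fin 2))) ((2:Fin 3),(1:Fin 2))
    have E8 := congrFun (congrFun h ((1:Fin 3),(1:Fin 2))) ((2:Fin 3),(0:Fin 2))
    have E9 := congrFun (congrFun h ((1:Fin 3),(0:Fin 2))) ((2:Fin 3),(1:Fin 2))
    simp [threeModeCM, J₃, J2x2, Matrix.mul_apply, Fintype.sum_prod_type,
      Fin.sum_univ_succ, a0, a1, b0, b1, c0, c1] at E1 E2 E3 E4 E5 E6 E7 E8 E9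
    refine ⟨?_, ?_, ?_, ?_, ?_, ?_⟩
    · simp [Matrix.det_fin_two, a0, a1, b0, b1]; linarith
    · simp [Matrix.det_fin_two, a0, a1, c0, c1]; linarith
    · simp [Matrix.det_fin_two, b0, b1, c0, c1]; linarith
    · ext i j
      fin_cases i <;> fin_cases j <;>
        simp [tildeM_eq, Matrix.hadamard, a0, a1, b0, b1, c0, c1] <;> linarith
    · ext i j
      fin_cases i <;> fin_cases j <;>
        simp [tildeM_eq, Matrix.hadamard, a0, a1, b0, b1, c0, c1] <;> linarith
    · ext i j
      fin_cases i <;> fin_cases j <;>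
        simp [tildeM_eq, Matrix.hadamard, a0, a1, b0, b1, c0, c1] <;> linarith
  · rintro ⟨C1, C2, C3, C4, C5, C6⟩
    have F1 := congrFun (congrFun C4 0) 0
    have F2 := congrFun (congrFun C4 1) 1
    have F3 := congrFun (congrFun C5 0) 0
    have F4 := congrFun (congrFun C5 1) 1
    have F5 := congrFun (congrFun C6 0) 0
    have F6 := congrFun (congrFun C6 1) 1
    simp [tildeM_eq, Matrix.hadamard, a0, a1, b0, b1, c0, c1] at F1 F2 F3 F4 F5 F6
    simp [Matrix.det_fin_two, a0, a1, b0, b1, c0, c1] at C1 C2 C3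
    ext ⟨i, j⟩ ⟨k, l⟩
    fin_cases i <;> fin_cases k <;> fin_cases j <;> fin_cases l <;>
      simp [threeModeCM, J₃, J2x2, Matrix.mul_apply, Fintype.sum_prod_type,
        Fin.sum_univ_succ, a0, a1, b0, b1, c0, c1] <;>
      linarith
end

section
/- Let γ be the 6×6 covariance matrix of a pure three-mode Gaussian state with diagonal blocks λᵢ·I (λᵢ ≥ 1) and diagonal off-diagonal blocks D_{ij}. Then for every permutation (i,j,k) of (1,2,3): det D_{ij} = (λ_k² + 1 − λ_i² − λ_j²)/2. -/
open Matrix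

theorem stmt_3 (l₁ l₂ l₃ : ℝ) (h₁ : 1 ≤ l₁) (h₂ : 1 ≤ l₂) (h₃ : 1 ≤ l₃)
    (D₁₂ D₁₃ D₂₃ : Matrix (Fin 2) (Fin 2) ℝ)
    (hD₁₂ : D₁₂.IsDiag) (hD₁₃ : D₁₃.IsDiag) (hD₂₃ : D₂₃.IsDiag)
    (γ : Matrix (Fin 3 × Fin 2) (Fin 3 × Fin 2) ℝ)
    (hγ : γ = threeModeCM l₁ l₂ l₃ D₁₂ D₁₃ D₂₃)
    (hpure : γ * J₃ * γ = J₃) :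
    D₁₂.det = (l₃ ^ 2 + 1 - l₁ ^ 2 - l₂ ^ 2) / 2 ∧
    D₁₃.det = (l₂ ^ 2 + 1 - l₁ ^ 2 - l₃ ^ 2) / 2 ∧
    D₂₃.det = (l₁ ^ 2 + 1 - l₂ ^ 2 - l₃ ^ 2) / 2 := by
  have z12 : D₁₂ 0 1 = 0 := hD₁₂ (by decide)
  have z12' : D₁₂ 1 0 = 0 := hD₁₂ (by decide)
  have z13 : D₁₃ 0 1 = 0 := hD₁₃ (by decide)
  have z13' : D₁₃ 1 0 = 0 := hD₁₃ (by decide)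
  have z23 : D₂₃ 0 1 = 0 := hD₂₃ (by decide)
  have z23' : D₂₃ 1 0 = 0 := hD₂₃ (by decide)
  have e1 := congrFun (congrFun hpure ((0:Fin 3),(0:Fin 2))) ((0:Fin 3),(1:Fin 2))
  have e2 := congrFun (congrFun hpure ((1:Fin 3),(0:Fin 2))) ((1:Fin 3),(1:Fin 2))
  have e3 := congrFun (congrFun hpure ((2:Fin 3),(0:Fin 2))) ((2:Fin 3),(1:Fin 2))
  simp [hγ, threeModeCM, J₃, J2x2, Matrix.mul_apply, Fintype.sum_prod_type,
    Fin.sum_univ_succ, Matrix.smul_apply, Matrix.one_apply, Matrix.transpose_apply,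
    z12, z12', z13, z13', z23, z23'] at e1 e2 e3
  rw [Matrix.det_fin_two, Matrix.det_fin_two, Matrix.det_fin_two,
    z12, z13, z23, z12', z13', z23']
  refine ⟨by nlinarith [e1, e2, e3], by nlinarith [e1, e2, e3], by nlinarith [e1, e2, e3]⟩
end

section
/- Let γ be a 6×6 real symmetric matrix with diagonal blocks λᵢ·I (λᵢ ≥ 1) and diagonal off-diagonal blocks D_{ij}, satisfying γ J₃ γ = J₃ and γ ≥ 0. Then for every permutation (i,j,k) of (1,2,3), the strict inequality λ_k < λ_i + λ_j + 1 holds. -/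
open Matrix

/-!
Since `M J Mᵀ = (det M) J` for every 2×2 matrix `M`, the diagonal blocks of `γ J₃ γ = J₃` say
`λᵢ² + det Dᵢⱼ + det Dᵢₖ = 1` for each mode, whence `λₖ² = λᵢ² + λⱼ² + 2 det Dᵢⱼ − 1`.
The 2×2 principal minors of `γ` on `(i, a), (j, a)` give `(Dᵢⱼ)ₐₐ² ≤ λᵢλⱼ`, so for diagonal `Dᵢⱼ`
also `det Dᵢⱼ ≤ λᵢλⱼ`; thus `λₖ² ≤ (λᵢ + λⱼ)² − 1 < (λᵢ + λⱼ + 1)²`, with `λᵢ, λⱼ ≥ 0`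
because they are diagonal entries of `γ`.
-/

lemma Matrix.PosSemidef.apply_sq_le_mul_apply {n : Type*} {A : Matrix n n ℝ} (hA : A.PosSemidef)
    (i j : n) : A i j ^ 2 ≤ A i i * A j j := by
  have hdet := (hA.submatrix ![i, j]).det_nonneg
  have hsymm : A j i = A i j := by simpa using hA.isHermitian.apply i j
  rw [det_fin_two] at hdet
  simp only [submatrix_apply, cons_val_zero, cons_val_one, hsymm] at hdet
  linarith

lemma det_le_of_isDiag {D : Matrix (Fin 2) (Fin 2) ℝ} (hD : D.IsDiag) {c : ℝ}
    (h : ∀ k, D k k ^ 2 ≤ c) : D.det ≤ c := by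
  rw [det_fin_two, hD (by decide : (0 : Fin 2) ≠ 1), zero_mul, sub_zero]
  nlinarith [two_mul_le_add_sq (D 0 0) (D 1 1), h 0, h 1]

lemma mul_J2x2_mul_transpose (M : Matrix (Fin 2) (Fin 2) ℝ) : M * J2x2 * Mᵀ = M.det • J2x2 := by
  ext i j
  fin_cases i <;> fin_cases j <;>
    simp [J2x2, det_fin_two, mul_apply, Fin.sum_univ_two] <;> ring

lemma transpose_mul_J2x2_mul (M : Matrix (Fin 2) (Fin 2) ℝ) : Mᵀ * J2x2 * M = M.det • J2x2 := by
  simpa using mul_J2x2_mul_transpose Mᵀ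

lemma eq_one_of_smul_J2x2_eq {c : ℝ} (h : c • J2x2 = J2x2) : c = 1 := by
  simpa [J2x2] using congrFun (congrFun h 1) 0

noncomputable def threeModeBlocks (l₁ l₂ l₃ : ℝ) (D₁₂ D₁₃ D₂₃ : Matrix (Fin 2) (Fin 2) ℝ) :
    Matrix (Fin 3) (Fin 3) (Matrix (Fin 2) (Fin 2) ℝ) :=
  of ![![l₁ • 1, D₁₂, D₁₃], ![D₁₂ᵀ, l₂ • 1, D₂₃], ![D₁₃ᵀ, D₂₃ᵀ, l₃ • 1]]

lemma threeModeCM_eq_compRingEquiv (l₁ l₂ l₃ : ℝ) (D₁₂ D₁₃ D₂₃ : Matrix (Fin 2) (Fin 2) ℝ) :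
    threeModeCM l₁ l₂ l₃ D₁₂ D₁₃ D₂₃ =
      compRingEquiv (Fin 3) (Fin 2) ℝ (threeModeBlocks l₁ l₂ l₃ D₁₂ D₁₃ D₂₃) :=
  rfl

lemma threeModeCM_apply (l₁ l₂ l₃ : ℝ) (D₁₂ D₁₃ D₂₃ : Matrix (Fin 2) (Fin 2) ℝ)
    (p q : Fin 3 × Fin 2) :
    threeModeCM l₁ l₂ l₃ D₁₂ D₁₃ D₂₃ p q = threeModeBlocks l₁ l₂ l₃ D₁₂ D₁₃ D₂₃ p.1 q.1 p.2 q.2 :=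
  rfl

lemma J₃_eq_compRingEquiv : J₃ = compRingEquiv (Fin 3) (Fin 2) ℝ (diagonal fun _ => J2x2) := by
  ext p q
  simp only [J₃, compRingEquiv_apply, comp_apply, diagonal_apply]
  split_ifs <;> rfl

lemma lt_add_add_one_of_sq_eq {x y z d : ℝ} (hy : 0 ≤ y) (hz : 0 ≤ z) (hd : d ≤ y * z)
    (h : x ^ 2 = y ^ 2 + z ^ 2 + 2 * d - 1) : x < y + z + 1 := by
  have hsq : x ^ 2 < (y + z + 1) ^ 2 := by nlinarith
  exact lt_of_abs_lt (abs_lt_of_sq_lt_sq hsq (by linarith))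

section threeModeCM

variable {l₁ l₂ l₃ : ℝ} {D₁₂ D₁₃ D₂₃ : Matrix (Fin 2) (Fin 2) ℝ}

lemma threeModeCM_purity
    (h : threeModeCM l₁ l₂ l₃ D₁₂ D₁₃ D₂₃ * J₃ * threeModeCM l₁ l₂ l₃ D₁₂ D₁₃ D₂₃ = J₃) :
    l₁ ^ 2 + D₁₂.det + D₁₃.det = 1 ∧ l₂ ^ 2 + D₁₂.det + D₂₃.det = 1 ∧
      l₃ ^ 2 + D₁₃.det + D₂₃.det = 1 := by
  rw [threeModeCM_eq_compRingEquiv, J₃_eq_compRingEquiv, ← map_mul, ← map_mul,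
    (compRingEquiv _ _ ℝ).injective.eq_iff] at h
  have block (i : Fin 3) := congrFun (congrFun h i) i
  have b₁ := block 0
  have b₂ := block 1
  have b₃ := block 2
  simp only [threeModeBlocks, mul_apply, Fin.sum_univ_three, diagonal_apply, of_apply, cons_val,
    Fin.reduceEq, ↓reduceIte, mul_zero, smul_zero, add_zero, zero_add, smul_mul_assoc,
    mul_smul_comm, one_mul, mul_one, smul_smul, mul_J2x2_mul_transpose, transpose_mul_J2x2_mul,
    ← add_smul] at b₁ b₂ b₃
  replace b₁ := eq_one_of_smul_J2x2_eq b₁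
  replace b₂ := eq_one_of_smul_J2x2_eq b₂
  replace b₃ := eq_one_of_smul_J2x2_eq b₃
  exact ⟨by linear_combination b₁, by linear_combination b₂, by linear_combination b₃⟩

lemma threeModeCM_nonneg (hpos : (threeModeCM l₁ l₂ l₃ D₁₂ D₁₃ D₂₃).PosSemidef) :
    0 ≤ l₁ ∧ 0 ≤ l₂ ∧ 0 ≤ l₃ := by
  have n₁ := hpos.diag_nonneg (i := (0, 0))
  have n₂ := hpos.diag_nonneg (i := (1, 0))
  have n₃ := hpos.diag_nonneg (i := (2, 0))
  simp only [threeModeCM_apply, threeModeBlocks, of_apply, cons_val, Matrix.smul_apply,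
    one_apply_eq, smul_eq_mul, mul_one] at n₁ n₂ n₃
  exact ⟨n₁, n₂, n₃⟩

lemma threeModeCM_det_le (hpos : (threeModeCM l₁ l₂ l₃ D₁₂ D₁₃ D₂₃).PosSemidef)
    (h₁₂ : D₁₂.IsDiag) (h₁₃ : D₁₃.IsDiag) (h₂₃ : D₂₃.IsDiag) :
    D₁₂.det ≤ l₁ * l₂ ∧ D₁₃.det ≤ l₁ * l₃ ∧ D₂₃.det ≤ l₂ * l₃ := by
  have s₁₂ (k : Fin 2) := hpos.apply_sq_le_mul_apply (0, k) (1, k)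
  have s₁₃ (k : Fin 2) := hpos.apply_sq_le_mul_apply (0, k) (2, k)
  have s₂₃ (k : Fin 2) := hpos.apply_sq_le_mul_apply (1, k) (2, k)
  simp only [threeModeCM_apply, threeModeBlocks, of_apply, cons_val, Matrix.smul_apply,
    one_apply_eq, smul_eq_mul, mul_one] at s₁₂ s₁₃ s₂₃
  exact ⟨det_le_of_isDiag h₁₂ s₁₂, det_le_of_isDiag h₁₃ s₁₃, det_le_of_isDiag h₂₃ s₂₃⟩

end threeModeCM

theorem stmt_4_general (l₁ l₂ l₃ : ℝ)
    (D₁₂ D₁₃ D₂₃ : Matrix (Fin 2) (Fin 2) ℝ)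
    (hD₁₂ : D₁₂.IsDiag) (hD₁₃ : D₁₃.IsDiag) (hD₂₃ : D₂₃.IsDiag)
    (γ : Matrix (Fin 3 × Fin 2) (Fin 3 × Fin 2) ℝ)
    (hγ : γ = threeModeCM l₁ l₂ l₃ D₁₂ D₁₃ D₂₃)
    (hpure : γ * J₃ * γ = J₃) (hpos : γ.PosSemidef) :
    l₁ < l₂ + l₃ + 1 ∧ l₂ < l₁ + l₃ + 1 ∧ l₃ < l₁ + l₂ + 1 := by
  subst hγ
  obtain ⟨e₁, e₂, e₃⟩ := threeModeCM_purity hpure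
  obtain ⟨n₁, n₂, n₃⟩ := threeModeCM_nonneg hpos
  obtain ⟨d₁₂, d₁₃, d₂₃⟩ := threeModeCM_det_le hpos hD₁₂ hD₁₃ hD₂₃
  exact ⟨lt_add_add_one_of_sq_eq n₂ n₃ d₂₃ (by linear_combination e₁ - e₂ - e₃),
    lt_add_add_one_of_sq_eq n₁ n₃ d₁₃ (by linear_combination e₂ - e₁ - e₃),
    lt_add_add_one_of_sq_eq n₁ n₂ d₁₂ (by linear_combination e₃ - e₁ - e₂)⟩

theorem stmt_4 (l₁ l₂ l₃ : ℝ) (h₁ : 1 ≤ l₁) (h₂ : 1 ≤ l₂) (h₃ : 1 ≤ l₃)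
    (D₁₂ D₁₃ D₂₃ : Matrix (Fin 2) (Fin 2) ℝ)
    (hD₁₂ : D₁₂.IsDiag) (hD₁₃ : D₁₃.IsDiag) (hD₂₃ : D₂₃.IsDiag)
    (γ : Matrix (Fin 3 × Fin 2) (Fin 3 × Fin 2) ℝ)
    (hγ : γ = threeModeCM l₁ l₂ l₃ D₁₂ D₁₃ D₂₃)
    (hpure : γ * J₃ * γ = J₃) (hpos : γ.PosSemidef) :
    l₁ < l₂ + l₃ + 1 ∧ l₂ < l₁ + l₃ + 1 ∧ l₃ < l₁ + l₂ + 1 :=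
  stmt_4_general l₁ l₂ l₃ D₁₂ D₁₃ D₂₃ hD₁₂ hD₁₃ hD₂₃ γ hγ hpure hpos
end

section
/- Let λ₁, λ₂, λ₃ ≥ 1 be reals satisfying λ_i + 1 ≤ λ_j + λ_k for all permutations (i,j,k) of (1,2,3). Set K₁ = −Σᵢλᵢ⁴ + 2Σᵢ(λ_j²λ_k² + λᵢ²) (with (j,k) the indices distinct from i). Then K₁ − 1 ≥ 0. -/
theorem stmt_5 (l₁ l₂ l₃ : ℝ) (h₁ : 1 ≤ l₁) (h₂ : 1 ≤ l₂) (h₃ : 1 ≤ l₃)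
    (ht₁ : l₁ + 1 ≤ l₂ + l₃) (ht₂ : l₂ + 1 ≤ l₁ + l₃) (ht₃ : l₃ + 1 ≤ l₁ + l₂)
    (K₁ : ℝ)
    (hK₁ : K₁ = -(l₁ ^ 4 + l₂ ^ 4 + l₃ ^ 4) +
      2 * ((l₂ ^ 2 * l₃ ^ 2 + l₁ ^ 2) + (l₁ ^ 2 * l₃ ^ 2 + l₂ ^ 2) +
           (l₁ ^ 2 * l₂ ^ 2 + l₃ ^ 2))) :
    0 ≤ K₁ - 1 := by
  subst hK₁
  have key : -(l₁ ^ 4 + l₂ ^ 4 + l₃ ^ 4) +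
      2 * (l₂ ^ 2 * l₃ ^ 2 + l₁ ^ 2 * l₃ ^ 2 + l₁ ^ 2 * l₂ ^ 2) =
      (l₁ + l₂ + l₃) * (-l₁ + l₂ + l₃) * (l₁ - l₂ + l₃) * (l₁ + l₂ - l₃) := by
    ring
  nlinarith [mul_nonneg (mul_nonneg (mul_nonneg (by linarith : (0:ℝ) ≤ l₁ + l₂ + l₃)
      (by linarith : (0:ℝ) ≤ -l₁ + l₂ + l₃)) (by linarith : (0:ℝ) ≤ l₁ - l₂ + l₃))
      (by linarith : (0:ℝ) ≤ l₁ + l₂ - l₃), sq_nonneg l₁, sq_nonneg l₂, sq_nonneg l₃,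
      one_le_sq_iff_one_le_abs l₁]
end

section
/- Let γ_x be the real symmetric 3×3 matrix with diagonal entries λ₁, λ₂, λ₃ ≥ 1 and off-diagonal entries d_{ij}^+ = (√a_{ij} + √b_{ij})/(4√(λ_iλ_j)), where a_{ij} = [(λ_i−λ_j)²−(λ_k−1)²][(λ_i−λ_j)²−(λ_k+1)²] and b_{ij} = [(λ_i+λ_j)²−(λ_k−1)²][(λ_i+λ_j)²−(λ_k+1)²]. If λ_i + 1 ≤ λ_j + λ_k for all permutations (i,j,k), then γ_x is positive semidefinite. -/
/-- `a_{ij}` with third index `k`. -/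
noncomputable def aCoef (li lj lk : ℝ) : ℝ :=
  ((li - lj) ^ 2 - (lk - 1) ^ 2) * ((li - lj) ^ 2 - (lk + 1) ^ 2)

/-- `b_{ij}` with third index `k`. -/
noncomputable def bCoef (li lj lk : ℝ) : ℝ :=
  ((li + lj) ^ 2 - (lk - 1) ^ 2) * ((li + lj) ^ 2 - (lk + 1) ^ 2)

/-- `d_{ij}^+ = (√a_{ij} + √b_{ij})/(4 √(λ_i λ_j))`. -/
noncomputable def dPlus (li lj lk : ℝ) : ℝ :=
  (Real.sqrt (aCoef li lj lk) + Real.sqrt (bCoef li lj lk)) / (4 * Real.sqrt (li * lj))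

/-!
Write `P₀, P₁, P₂, P₃` for `t² - 1` at `t = λ₁ + λ₂ + λ₃, λ₁ + λ₂ - λ₃, λ₁ - λ₂ + λ₃, λ₁ - λ₂ - λ₃`,
and `sᵢ = √Pᵢ`. Each `a_{ij}` and `b_{ij}` is a product of two of the `Pᵢ`, all of which are
nonnegative under the triangle conditions, so `4 √(λᵢλⱼ) d_{ij}^+` is a sum of two products
`s_a s_b + s_c s_d`. Conjugating by `diag(√λᵢ)` turns `4 γ_x` into the matrix `N` with diagonal
`4 λᵢ²` and these off-diagonal entries. With `p = s₀s₁s₂s₃`, the leading `2 × 2` minor of `N` is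
`S - 2p` for a polynomial `S` in the `λᵢ`, and `det N = 4 (S - 2p)`. Finally `S > 0` (it is twice
Heron's product plus `4 ∑ λᵢ² - 2`) and `S² - 4p² = 256 (λ₁λ₂λ₃)²`, so `S - 2p > 0`, and Sylvester's
criterion applies.
-/

open Matrix

theorem posSemidef_fin_three_of_leadingMinors {a b c d e f : ℝ} (ha : 0 < a)
    (hm : 0 < a * d - b ^ 2) (hdet : 0 ≤ !![a, b, c; b, d, e; c, e, f].det) :
    !![a, b, c; b, d, e; c, e, f].PosSemidef := by
  rw [det_fin_three] at hdet
  simp only [of_apply, cons_val', cons_val_zero, cons_val_one, cons_val_two, empty_val',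
    cons_val_fin_one, head_cons, head_fin_const, tail_cons] at hdet
  refine .of_dotProduct_mulVec_nonneg ?_ fun v ↦ ?_
  · ext i j; fin_cases i <;> fin_cases j <;> rfl
  · simp only [star_trivial, dotProduct, mulVec, Fin.sum_univ_three, of_apply, cons_val',
      cons_val_zero, cons_val_one, cons_val_two, empty_val', cons_val_fin_one, head_cons,
      head_fin_const, tail_cons]
    set x := v 0; set y := v 1; set z := v 2
    -- Lagrange's reduction of the quadratic form to a sum of squares
    have key : a * (a * d - b ^ 2) * (x * (a * x + b * y + c * z) + y * (b * x + d * y + e * z)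
        + z * (c * x + e * y + f * z)) = (a * d - b ^ 2) * (a * x + b * y + c * z) ^ 2
          + ((a * d - b ^ 2) * y + (a * e - b * c) * z) ^ 2
          + a * (a * d * f - a * e * e - b * b * f + b * e * c + c * b * e - c * d * c) * z ^ 2 := by
      ring
    have hprod : 0 ≤ a * (a * d - b ^ 2) * (x * (a * x + b * y + c * z)
        + y * (b * x + d * y + e * z) + z * (c * x + e * y + f * z)) := by
      rw [key]; positivity
    exact nonneg_of_mul_nonneg_right hprod (mul_pos ha hm)

theorem sq_mul_add_mul_of_sq_eq {R : Type*} [CommRing R] {a b c d A B C D : R}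
    (ha : a ^ 2 = A) (hb : b ^ 2 = B) (hc : c ^ 2 = C) (hd : d ^ 2 = D) :
    (a * b + c * d) ^ 2 = A * B + C * D + 2 * (a * b * c * d) := by
  subst ha hb hc hd; ring

theorem pairings_prod_of_sq_eq {R : Type*} [CommRing R] {a b c d A B C D : R}
    (ha : a ^ 2 = A) (hb : b ^ 2 = B) (hc : c ^ 2 = C) (hd : d ^ 2 = D) :
    (c * d + a * b) * (b * d + a * c) * (b * c + a * d)
      = a * b * c * d * (A + B + C + D) + (B * C * D + A * C * D + A * B * D + A * B * C) := by
  subst ha hb hc hd; ring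

/-- The matrix `N = 4 diag(√λᵢ) γ_x diag(√λᵢ)`, once `√a_{ij}` and `√b_{ij}` are split into
products of the `sᵢ`. -/
def pairingMatrix (l₁ l₂ l₃ s₀ s₁ s₂ s₃ : ℝ) : Matrix (Fin 3) (Fin 3) ℝ :=
  !![4 * l₁ ^ 2, s₂ * s₃ + s₀ * s₁, s₁ * s₃ + s₀ * s₂;
     s₂ * s₃ + s₀ * s₁, 4 * l₂ ^ 2, s₁ * s₂ + s₀ * s₃;
     s₁ * s₃ + s₀ * s₂, s₁ * s₂ + s₀ * s₃, 4 * l₃ ^ 2]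

section PairingMatrix

variable {l₁ l₂ l₃ s₀ s₁ s₂ s₃ : ℝ}

theorem det_pairingMatrix
    (hs₀ : s₀ ^ 2 = (l₁ + l₂ + l₃) ^ 2 - 1) (hs₁ : s₁ ^ 2 = (l₁ + l₂ - l₃) ^ 2 - 1)
    (hs₂ : s₂ ^ 2 = (l₁ - l₂ + l₃) ^ 2 - 1) (hs₃ : s₃ ^ 2 = (l₁ - l₂ - l₃) ^ 2 - 1) :
    (pairingMatrix l₁ l₂ l₃ s₀ s₁ s₂ s₃).det
      = 4 * (4 * l₁ ^ 2 * (4 * l₂ ^ 2) - (s₂ * s₃ + s₀ * s₁) ^ 2) := by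
  rw [pairingMatrix, det_fin_three]
  simp only [of_apply, cons_val', cons_val_zero, cons_val_one, cons_val_two, empty_val',
    cons_val_fin_one, head_cons, head_fin_const, tail_cons]
  linear_combination 2 * pairings_prod_of_sq_eq hs₀ hs₁ hs₂ hs₃
    - 4 * l₁ ^ 2 * sq_mul_add_mul_of_sq_eq hs₁ hs₂ hs₀ hs₃
    - 4 * l₂ ^ 2 * sq_mul_add_mul_of_sq_eq hs₁ hs₃ hs₀ hs₂
    - (4 * l₃ ^ 2 - 4) * sq_mul_add_mul_of_sq_eq hs₂ hs₃ hs₀ hs₁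

theorem pairingMatrix_minor_pos (h₁ : 1 ≤ l₁) (h₂ : 1 ≤ l₂) (h₃ : 1 ≤ l₃)
    (ht₁ : l₁ ≤ l₂ + l₃) (ht₂ : l₂ ≤ l₁ + l₃) (ht₃ : l₃ ≤ l₁ + l₂)
    (hs₀ : s₀ ^ 2 = (l₁ + l₂ + l₃) ^ 2 - 1) (hs₁ : s₁ ^ 2 = (l₁ + l₂ - l₃) ^ 2 - 1)
    (hs₂ : s₂ ^ 2 = (l₁ - l₂ + l₃) ^ 2 - 1) (hs₃ : s₃ ^ 2 = (l₁ - l₂ - l₃) ^ 2 - 1) :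
    0 < 4 * l₁ ^ 2 * (4 * l₂ ^ 2) - (s₂ * s₃ + s₀ * s₁) ^ 2 := by
  set p := s₀ * s₁ * s₂ * s₃
  set S := 16 * l₁ ^ 2 * l₂ ^ 2 - ((l₁ + l₂ + l₃) ^ 2 - 1) * ((l₁ + l₂ - l₃) ^ 2 - 1)
    - ((l₁ - l₂ + l₃) ^ 2 - 1) * ((l₁ - l₂ - l₃) ^ 2 - 1)
  have hminor : 4 * l₁ ^ 2 * (4 * l₂ ^ 2) - (s₂ * s₃ + s₀ * s₁) ^ 2 = S - 2 * p := by
    linear_combination -sq_mul_add_mul_of_sq_eq hs₂ hs₃ hs₀ hs₁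
  have hheron : 0 ≤ (l₁ + l₂ + l₃) * (-l₁ + l₂ + l₃) * (l₁ - l₂ + l₃) * (l₁ + l₂ - l₃) := by
    refine mul_nonneg (mul_nonneg (mul_nonneg ?_ ?_) ?_) ?_ <;> linarith
  have hS : 0 < S := calc
    0 < 2 * ((l₁ + l₂ + l₃) * (-l₁ + l₂ + l₃) * (l₁ - l₂ + l₃) * (l₁ + l₂ - l₃))
        + 4 * (l₁ ^ 2 + l₂ ^ 2 + l₃ ^ 2) - 2 := by
      linarith [one_le_pow₀ (n := 2) h₁, one_le_pow₀ (n := 2) h₂, one_le_pow₀ (n := 2) h₃]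
    _ = S := by ring
  have hgap : (2 * p) ^ 2 < S ^ 2 := by
    have hp : p ^ 2 = ((l₁ + l₂ + l₃) ^ 2 - 1) * ((l₁ + l₂ - l₃) ^ 2 - 1)
        * ((l₁ - l₂ + l₃) ^ 2 - 1) * ((l₁ - l₂ - l₃) ^ 2 - 1) := by
      simp only [p, mul_pow, hs₀, hs₁, hs₂, hs₃]
    have hdiff : S ^ 2 - (2 * p) ^ 2 = 256 * (l₁ * l₂ * l₃) ^ 2 := by
      rw [mul_pow, hp]; ring
    have : 0 < 256 * (l₁ * l₂ * l₃) ^ 2 := by positivity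
    linarith
  rw [hminor]
  linarith [le_abs_self (2 * p), abs_lt_of_sq_lt_sq hgap hS.le]

theorem pairingMatrix_posSemidef (h₁ : 1 ≤ l₁) (h₂ : 1 ≤ l₂) (h₃ : 1 ≤ l₃)
    (ht₁ : l₁ ≤ l₂ + l₃) (ht₂ : l₂ ≤ l₁ + l₃) (ht₃ : l₃ ≤ l₁ + l₂)
    (hs₀ : s₀ ^ 2 = (l₁ + l₂ + l₃) ^ 2 - 1) (hs₁ : s₁ ^ 2 = (l₁ + l₂ - l₃) ^ 2 - 1)
    (hs₂ : s₂ ^ 2 = (l₁ - l₂ + l₃) ^ 2 - 1) (hs₃ : s₃ ^ 2 = (l₁ - l₂ - l₃) ^ 2 - 1) :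
    (pairingMatrix l₁ l₂ l₃ s₀ s₁ s₂ s₃).PosSemidef := by
  have hminor := pairingMatrix_minor_pos h₁ h₂ h₃ ht₁ ht₂ ht₃ hs₀ hs₁ hs₂ hs₃
  refine posSemidef_fin_three_of_leadingMinors (by positivity) hminor ?_
  exact (det_pairingMatrix hs₀ hs₁ hs₂ hs₃).symm ▸ by positivity

end PairingMatrix

theorem dPlus_eq_mul {li lj lk : ℝ} (hi : 0 ≤ li) :
    dPlus li lj lk
      = (2 * √li)⁻¹ * (√(aCoef li lj lk) + √(bCoef li lj lk)) * (2 * √lj)⁻¹ := by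
  rw [dPlus, Real.sqrt_mul hi]
  ring

theorem inv_two_sqrt_mul_four_sq_mul_inv_two_sqrt {l : ℝ} (hl : 0 < l) :
    (2 * √l)⁻¹ * (4 * l ^ 2) * (2 * √l)⁻¹ = l := by
  have := Real.sq_sqrt hl.le
  field_simp
  linear_combination (-4) * this

theorem sqrt_eq_sqrt_mul_sqrt_of_eq {x A B : ℝ} (hA : 0 ≤ A) (h : x = A * B) :
    √x = √A * √B := by
  rw [h, Real.sqrt_mul hA]

theorem stmt_9 (l₁ l₂ l₃ : ℝ) (h₁ : 1 ≤ l₁) (h₂ : 1 ≤ l₂) (h₃ : 1 ≤ l₃)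
    (ht₁ : l₁ + 1 ≤ l₂ + l₃) (ht₂ : l₂ + 1 ≤ l₁ + l₃) (ht₃ : l₃ + 1 ≤ l₁ + l₂)
    (γx : Matrix (Fin 3) (Fin 3) ℝ)
    (hγx : γx = !![l₁, dPlus l₁ l₂ l₃, dPlus l₁ l₃ l₂;
                   dPlus l₁ l₂ l₃, l₂, dPlus l₂ l₃ l₁;
                   dPlus l₁ l₃ l₂, dPlus l₂ l₃ l₁, l₃]) :
    γx.PosSemidef := by
  have hl₁ : 0 < l₁ := by linarith
  have hl₂ : 0 < l₂ := by linarith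
  have hl₃ : 0 < l₃ := by linarith
  have hP₀ : 0 ≤ (l₁ + l₂ + l₃) ^ 2 - 1 := by nlinarith
  have hP₁ : 0 ≤ (l₁ + l₂ - l₃) ^ 2 - 1 := by nlinarith
  have hP₂ : 0 ≤ (l₁ - l₂ + l₃) ^ 2 - 1 := by nlinarith
  have hP₃ : 0 ≤ (l₁ - l₂ - l₃) ^ 2 - 1 := by nlinarith
  set s₀ := √((l₁ + l₂ + l₃) ^ 2 - 1)
  set s₁ := √((l₁ + l₂ - l₃) ^ 2 - 1)
  set s₂ := √((l₁ - l₂ + l₃) ^ 2 - 1)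
  set s₃ := √((l₁ - l₂ - l₃) ^ 2 - 1)
  have ha₁₂ : √(aCoef l₁ l₂ l₃) = s₂ * s₃ := sqrt_eq_sqrt_mul_sqrt_of_eq hP₂ (by unfold aCoef; ring)
  have hb₁₂ : √(bCoef l₁ l₂ l₃) = s₀ * s₁ := sqrt_eq_sqrt_mul_sqrt_of_eq hP₀ (by unfold bCoef; ring)
  have ha₁₃ : √(aCoef l₁ l₃ l₂) = s₁ * s₃ := sqrt_eq_sqrt_mul_sqrt_of_eq hP₁ (by unfold aCoef; ring)
  have hb₁₃ : √(bCoef l₁ l₃ l₂) = s₀ * s₂ := sqrt_eq_sqrt_mul_sqrt_of_eq hP₀ (by unfold bCoef; ring)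
  have ha₂₃ : √(aCoef l₂ l₃ l₁) = s₁ * s₂ := sqrt_eq_sqrt_mul_sqrt_of_eq hP₁ (by unfold aCoef; ring)
  have hb₂₃ : √(bCoef l₂ l₃ l₁) = s₀ * s₃ := sqrt_eq_sqrt_mul_sqrt_of_eq hP₀ (by unfold bCoef; ring)
  have hN := pairingMatrix_posSemidef h₁ h₂ h₃ (by linarith) (by linarith) (by linarith)
    (Real.sq_sqrt hP₀) (Real.sq_sqrt hP₁) (Real.sq_sqrt hP₂) (Real.sq_sqrt hP₃)
  set D := diagonal ![(2 * √l₁)⁻¹, (2 * √l₂)⁻¹, (2 * √l₃)⁻¹]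
  have hγ : γx = Dᴴ * pairingMatrix l₁ l₂ l₃ s₀ s₁ s₂ s₃ * D := by
    rw [hγx, diagonal_conjTranspose, star_trivial]
    ext i j
    fin_cases i <;> fin_cases j <;>
      simp only [D, pairingMatrix, diagonal_mul, mul_diagonal, of_apply, cons_val', cons_val_zero,
        cons_val_one, cons_val_two, empty_val', cons_val_fin_one, head_cons, head_fin_const,
        tail_cons, Fin.mk_one, Fin.zero_eta, Fin.reduceFinMk, dPlus_eq_mul hl₁.le,
        dPlus_eq_mul hl₂.le, ha₁₂, hb₁₂, ha₁₃, hb₁₃, ha₂₃, hb₂₃,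
        inv_two_sqrt_mul_four_sq_mul_inv_two_sqrt hl₁,
        inv_two_sqrt_mul_four_sq_mul_inv_two_sqrt hl₂,
        inv_two_sqrt_mul_four_sq_mul_inv_two_sqrt hl₃]
    all_goals ring
  exact hγ ▸ hN.conjTranspose_mul_mul_same D
end

section
/- Suppose a 6×6 real matrix γ with 2×2 diagonal blocks λᵢ·I (λᵢ ≥ 1), with D₁₂ diagonal, L upper-triangular, and M arbitrary 2×2 real, satisfies the purity conditions: the three determinant equations (1 = λ₁² + det D₁₂ + det L, etc.) and 0 = λ₁ J D₁₂ + λ₂ D₁₂ J + L J Mᵀ, 0 = λ₁ J L + λ₃ L J + D₁₂ J Mᵀ, 0 = λ₂ J M + λ₃ M J + D₁₂ᵀ J L. Then, up to an orthogonal transformation on the third mode, both L and M are diagonal matrices. -/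
/-!
Reading off five entries of the three off-diagonal block equations (with `D₁₂` diagonal and `L`
upper triangular) leaves two cases. Either `M 1 0 = 0`, and then `L` and `M` are already
diagonal; or the second row of `L` vanishes, the first rows of `L` and `M` are parallel, and the
second row of `M` is orthogonal to its first row. In both cases the rotation taking a common
direction `(x, y)` to the first axis diagonalises `L` and `M` simultaneously.
-/

open Matrix

-- `purityᵢⱼ` is the `(i, j)` block of `γ J₃ γ = J₃`.
section purity

variable {l₁ l₂ l₃ : ℝ} {D L M : Matrix (Fin 2) (Fin 2) ℝ}

theorem purity₁₂_entries (hD : D.IsDiag) (hL : L 1 0 = 0)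
    (h : l₁ • (!![0, -1; 1, 0] * D) + l₂ • (D * !![0, -1; 1, 0]) + L * !![0, -1; 1, 0] * Mᵀ = 0) :
    L 0 1 * M 0 0 = L 0 0 * M 0 1 ∧ L 1 1 * M 1 0 = 0 := by
  obtain ⟨d, rfl⟩ : ∃ d, D = diagonal d := ⟨D.diag, hD.diagonal_diag.symm⟩
  constructor
  · linear_combination (norm := simp [mul_apply, vecMul, dotProduct]) congrFun₂ h 0 0
  · linear_combination (norm := simp [mul_apply, vecMul, dotProduct, hL]) congrFun₂ h 1 1

theorem purity₁₃_entries (hD : D.IsDiag) (hL : L 1 0 = 0)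
    (h : l₁ • (!![0, -1; 1, 0] * L) + l₃ • (L * !![0, -1; 1, 0]) + D * !![0, -1; 1, 0] * Mᵀ = 0) :
    l₁ * L 0 1 + D 1 1 * M 1 0 = 0 := by
  obtain ⟨d, rfl⟩ : ∃ d, D = diagonal d := ⟨D.diag, hD.diagonal_diag.symm⟩
  linear_combination (norm := simp [mul_apply, vecMul, dotProduct, hL]) congrFun₂ h 1 1

theorem purity₂₃_entries (hD : D.IsDiag) (hL : L 1 0 = 0)
    (h : l₂ • (!![0, -1; 1, 0] * M) + l₃ • (M * !![0, -1; 1, 0]) + Dᵀ * !![0, -1; 1, 0] * L = 0) :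
    l₃ * M 0 1 = l₂ * M 1 0 ∧ l₂ * M 1 1 + l₃ * M 0 0 + D 0 0 * L 1 1 = 0 := by
  obtain ⟨d, rfl⟩ : ∃ d, D = diagonal d := ⟨D.diag, hD.diagonal_diag.symm⟩
  constructor
  · linear_combination (norm := simp [mul_apply, vecMul, dotProduct, hL]) congrFun₂ h 0 0
  · linear_combination (norm := (simp [mul_apply, vecMul, dotProduct]; ring)) -congrFun₂ h 0 1

end purity

/-- Row `0` of `A` is parallel to `(x, y)` and row `1` is orthogonal to it. -/
def AlignedWith (A : Matrix (Fin 2) (Fin 2) ℝ) (x y : ℝ) : Prop :=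
  A 0 0 * y = A 0 1 * x ∧ A 1 0 * x + A 1 1 * y = 0

noncomputable def rotationTo (x y : ℝ) : Matrix (Fin 2) (Fin 2) ℝ :=
  (√(x ^ 2 + y ^ 2))⁻¹ • !![x, y; -y, x]

section rotationTo

variable {x y : ℝ}

theorem inv_sqrt_sq_mul (h : x ^ 2 + y ^ 2 ≠ 0) :
    (√(x ^ 2 + y ^ 2))⁻¹ ^ 2 * (x ^ 2 + y ^ 2) = 1 := by
  rw [inv_pow, Real.sq_sqrt (by positivity), inv_mul_cancel₀ h]

theorem rotationTo_mul_transpose (h : x ^ 2 + y ^ 2 ≠ 0) :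
    rotationTo x y * (rotationTo x y)ᵀ = 1 := by
  have hR : !![x, y; -y, x] * !![x, y; -y, x]ᵀ =
      (x ^ 2 + y ^ 2) • (1 : Matrix (Fin 2) (Fin 2) ℝ) := by
    ext i j
    fin_cases i <;> fin_cases j <;> simp [mul_apply] <;> ring
  rw [rotationTo, transpose_smul, smul_mul_smul_comm, hR, smul_smul, ← sq, inv_sqrt_sq_mul h,
    one_smul]

theorem det_rotationTo (h : x ^ 2 + y ^ 2 ≠ 0) : (rotationTo x y).det = 1 := by
  rw [rotationTo, det_smul, det_fin_two_of, Fintype.card_fin, ← inv_sqrt_sq_mul h]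
  ring

theorem AlignedWith.isDiag_mul_rotationTo_transpose {A : Matrix (Fin 2) (Fin 2) ℝ}
    (h : AlignedWith A x y) : (A * (rotationTo x y)ᵀ).IsDiag := by
  obtain ⟨h₀, h₁⟩ := h
  rw [rotationTo, transpose_smul, mul_smul_comm]
  refine IsDiag.smul _ fun i j hij => ?_
  fin_cases i <;> fin_cases j <;> simp_all [mul_apply, Fin.sum_univ_two]

end rotationTo

theorem exists_alignedWith_of_purity_entries {l₁ l₂ l₃ d₀ d₁ : ℝ}
    {L M : Matrix (Fin 2) (Fin 2) ℝ} (hl₁ : l₁ ≠ 0) (hl₂ : l₂ ≠ 0) (hl₃ : l₃ ≠ 0)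
    (hL : L 1 0 = 0) (h₁ : L 0 1 * M 0 0 = L 0 0 * M 0 1) (h₂ : L 1 1 * M 1 0 = 0)
    (h₃ : l₁ * L 0 1 + d₁ * M 1 0 = 0) (h₄ : l₃ * M 0 1 = l₂ * M 1 0)
    (h₅ : l₂ * M 1 1 + l₃ * M 0 0 + d₀ * L 1 1 = 0) :
    ∃ x y : ℝ, x ^ 2 + y ^ 2 ≠ 0 ∧ AlignedWith L x y ∧ AlignedWith M x y := by
  by_cases hM : M 1 0 = 0
  · have hL₀₁ : L 0 1 = 0 := by simpa [hM, hl₁] using h₃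
    have hM₀₁ : M 0 1 = 0 := by simpa [hM, hl₃] using h₄
    exact ⟨1, 0, by norm_num, by simp [AlignedWith, hL, hL₀₁], by simp [AlignedWith, hM, hM₀₁]⟩
  · have hL₁₁ : L 1 1 = 0 := (mul_eq_zero.1 h₂).resolve_right hM
    have hM₀₁ : M 0 1 ≠ 0 := by
      intro h
      simp [h, hl₂, hM] at h₄
    have hM₁ : M 1 0 * M 0 0 + M 1 1 * M 0 1 = 0 := by
      refine (mul_eq_zero.1 (?_ : l₂ * l₃ * _ = 0)).resolve_left (mul_ne_zero hl₂ hl₃)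
      linear_combination -l₃ * M 0 0 * h₄ + l₃ * M 0 1 * h₅ - l₃ * d₀ * M 0 1 * hL₁₁
    refine ⟨M 0 0, M 0 1, by positivity, ⟨by linear_combination -h₁, by simp [hL, hL₁₁]⟩,
      ⟨by ring, hM₁⟩⟩

theorem stmt_11_general (l₁ l₂ l₃ : ℝ) (h₁ : 1 ≤ l₁) (h₂ : 1 ≤ l₂) (h₃ : 1 ≤ l₃)
    (J : Matrix (Fin 2) (Fin 2) ℝ) (hJ : J = !![0, -1; 1, 0])
    (D₁₂ L M : Matrix (Fin 2) (Fin 2) ℝ)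
    (hD₁₂ : D₁₂.IsDiag) (hL : L 1 0 = 0)
    (e₄ : l₁ • (J * D₁₂) + l₂ • (D₁₂ * J) + L * J * Mᵀ = 0)
    (e₅ : l₁ • (J * L) + l₃ • (L * J) + D₁₂ * J * Mᵀ = 0)
    (e₆ : l₂ • (J * M) + l₃ • (M * J) + D₁₂ᵀ * J * L = 0) :
    ∃ O : Matrix (Fin 2) (Fin 2) ℝ,
      O * Oᵀ = 1 ∧ O.det = 1 ∧ (L * Oᵀ).IsDiag ∧ (M * Oᵀ).IsDiag := by
  subst hJ
  obtain ⟨c₁, c₂⟩ := purity₁₂_entries hD₁₂ hL e₄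
  obtain ⟨c₄, c₅⟩ := purity₂₃_entries hD₁₂ hL e₆
  obtain ⟨x, y, hxy, hLxy, hMxy⟩ := exists_alignedWith_of_purity_entries
    (zero_lt_one.trans_le h₁).ne' (zero_lt_one.trans_le h₂).ne' (zero_lt_one.trans_le h₃).ne'
    hL c₁ c₂ (purity₁₃_entries hD₁₂ hL e₅) c₄ c₅
  exact ⟨rotationTo x y, rotationTo_mul_transpose hxy, det_rotationTo hxy,
    hLxy.isDiag_mul_rotationTo_transpose, hMxy.isDiag_mul_rotationTo_transpose⟩

theorem stmt_11 (l₁ l₂ l₃ : ℝ) (h₁ : 1 ≤ l₁) (h₂ : 1 ≤ l₂) (h₃ : 1 ≤ l₃)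
    (J : Matrix (Fin 2) (Fin 2) ℝ) (hJ : J = !![0, -1; 1, 0])
    (D₁₂ L M : Matrix (Fin 2) (Fin 2) ℝ)
    (hD₁₂ : D₁₂.IsDiag) (hL : L 1 0 = 0)
    (e₁ : l₁ ^ 2 + D₁₂.det + L.det = 1)
    (e₂ : l₂ ^ 2 + D₁₂.det + M.det = 1)
    (e₃ : l₃ ^ 2 + L.det + M.det = 1)
    (e₄ : l₁ • (J * D₁₂) + l₂ • (D₁₂ * J) + L * J * Mᵀ = 0)
    (e₅ : l₁ • (J * L) + l₃ • (L * J) + D₁₂ * J * Mᵀ = 0)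
    (e₆ : l₂ • (J * M) + l₃ • (M * J) + D₁₂ᵀ * J * L = 0) :
    ∃ O : Matrix (Fin 2) (Fin 2) ℝ,
      O * Oᵀ = 1 ∧ O.det = 1 ∧ (L * Oᵀ).IsDiag ∧ (M * Oᵀ).IsDiag :=
  stmt_11_general l₁ l₂ l₃ h₁ h₂ h₃ J hJ D₁₂ L M hD₁₂ hL e₄ e₅ e₆
end

section
/- Let λ₂, λ₃ ≥ 1 and set λ₁ = √(λ₂² + λ₃² − 1), a = √(λ₂(λ₂²−1))/√λ₁, b = −√(λ₂ − 1/λ₂)·√λ₁, c = √(λ₃(λ₃²−1)/λ₁), d = −√(λ₃ − 1/λ₃)·√λ₁, e = 0, f = √((λ₂²−1)(λ₃²−1))/√(λ₂λ₃). Then the 6×6 matrix γ with diagonal blocks λᵢ·I and off-diagonal blocks D₁₂ = diag(a,b), D₁₃ = diag(c,d), D₂₃ = diag(e,f) satisfies γ J₃ γ = J₃. -/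
open Matrix

/-!
Since every off-diagonal block is diagonal, `γ` never correlates an `x`-quadrature with a
`p`-quadrature: it splits into the symmetric `3 × 3` matrices `P` of `x–x` and `Q` of `p–p`
correlations, and `γ J₃ γ = J₃` becomes `P Q = 1`. The explicit coefficients are
`a = λ₂u, b = -λ₁u, c = λ₃v, d = -λ₁v, f = λ₁uv` with `λ₁λ₂u² = λ₂² - 1` and `λ₁λ₃v² = λ₃² - 1`,
and for this family `P Q = 1` follows entrywise from `λ₁² = λ₂² + λ₃² - 1`.
-/

noncomputable def quadratureBlockDiag (P Q : Matrix (Fin 3) (Fin 3) ℝ) :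
    Matrix (Fin 3 × Fin 2) (Fin 3 × Fin 2) ℝ :=
  fun p q => if p.2 = q.2 then ![P, Q] p.2 p.1 q.1 else 0

theorem quadratureBlockDiag_mul_J₃_mul_self {P Q : Matrix (Fin 3) (Fin 3) ℝ}
    (h : P * Q = 1) : quadratureBlockDiag P Q * J₃ * quadratureBlockDiag P Q = J₃ := by
  have hPQ (i j : Fin 3) : ∑ k, P i k * Q k j = if i = j then 1 else 0 := by
    rw [← mul_apply, h, one_apply]
  have hQP (i j : Fin 3) : ∑ k, Q i k * P k j = if i = j then 1 else 0 := by
    rw [← mul_apply, mul_eq_one_comm.mp h, one_apply]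
  ext ⟨i, α⟩ ⟨j, β⟩
  revert α β
  simp [Fin.forall_fin_two, quadratureBlockDiag, J₃, J2x2, mul_apply, Fintype.sum_prod_type,
    hPQ, hQP, neg_ite]

theorem threeModeCM_diagonal (l₁ l₂ l₃ a b c d e f : ℝ) :
    threeModeCM l₁ l₂ l₃ (diagonal ![a, b]) (diagonal ![c, d]) (diagonal ![e, f]) =
      quadratureBlockDiag !![l₁, a, c; a, l₂, e; c, e, l₃] !![l₁, b, d; b, l₂, f; d, f, l₃] := by
  ext ⟨i, α⟩ ⟨j, β⟩
  revert i j α β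
  simp [Fin.forall_fin_succ, threeModeCM, quadratureBlockDiag]

theorem xBlock_mul_pBlock_eq_one {l₁ l₂ l₃ u v : ℝ} (h₁ : l₁ ^ 2 = l₂ ^ 2 + l₃ ^ 2 - 1)
    (hu : l₁ * l₂ * u ^ 2 = l₂ ^ 2 - 1) (hv : l₁ * l₃ * v ^ 2 = l₃ ^ 2 - 1) :
    !![l₁, l₂ * u, l₃ * v; l₂ * u, l₂, 0; l₃ * v, 0, l₃] *
      !![l₁, -(l₁ * u), -(l₁ * v); -(l₁ * u), l₂, l₁ * u * v; -(l₁ * v), l₁ * u * v, l₃] = 1 := by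
  rw [mul_fin_three, one_fin_three]
  congr!
  · linear_combination h₁ - hu - hv
  · linear_combination u * hv - u * h₁
  · linear_combination v * hu - v * h₁
  · ring
  · linear_combination -hu
  · ring
  · ring
  · ring
  · linear_combination -hv

theorem exists_uv_of_explicit_coeffs {l₁ l₂ l₃ a b c d f : ℝ} (h₂ : 1 ≤ l₂) (h₃ : 1 ≤ l₃)
    (hl₁ : 0 < l₁) (ha : a = Real.sqrt (l₂ * (l₂ ^ 2 - 1)) / Real.sqrt l₁)
    (hb : b = -Real.sqrt (l₂ - 1 / l₂) * Real.sqrt l₁)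
    (hc : c = Real.sqrt (l₃ * (l₃ ^ 2 - 1) / l₁))
    (hd : d = -Real.sqrt (l₃ - 1 / l₃) * Real.sqrt l₁)
    (hf : f = Real.sqrt ((l₂ ^ 2 - 1) * (l₃ ^ 2 - 1)) / Real.sqrt (l₂ * l₃)) :
    ∃ u v : ℝ, l₁ * l₂ * u ^ 2 = l₂ ^ 2 - 1 ∧ l₁ * l₃ * v ^ 2 = l₃ ^ 2 - 1 ∧
      a = l₂ * u ∧ b = -(l₁ * u) ∧ c = l₃ * v ∧ d = -(l₁ * v) ∧ f = l₁ * u * v := by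
  have hl₂ : 0 < l₂ := by linarith
  have hl₃ : 0 < l₃ := by linarith
  have hq₂ : 0 ≤ l₂ ^ 2 - 1 := by nlinarith
  have hq₃ : 0 ≤ l₃ ^ 2 - 1 := by nlinarith
  rw [Real.sqrt_mul hl₂.le] at ha
  rw [show l₂ - 1 / l₂ = (l₂ ^ 2 - 1) / l₂ by field_simp, Real.sqrt_div hq₂] at hb
  rw [Real.sqrt_div' _ hl₁.le, Real.sqrt_mul hl₃.le] at hc
  rw [show l₃ - 1 / l₃ = (l₃ ^ 2 - 1) / l₃ by field_simp, Real.sqrt_div hq₃] at hd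
  rw [Real.sqrt_mul hq₂, Real.sqrt_mul hl₂.le] at hf
  have hr₁ := Real.sq_sqrt hl₁.le
  have hr₂ := Real.sq_sqrt hl₂.le
  have hr₃ := Real.sq_sqrt hl₃.le
  have hs₂ := Real.sq_sqrt hq₂
  have hs₃ := Real.sq_sqrt hq₃
  have hr₁pos : 0 < Real.sqrt l₁ := Real.sqrt_pos.mpr hl₁
  have hr₂pos : 0 < Real.sqrt l₂ := Real.sqrt_pos.mpr hl₂
  have hr₃pos : 0 < Real.sqrt l₃ := Real.sqrt_pos.mpr hl₃
  -- In `rᵢ = √λᵢ` and `sᵢ = √(λᵢ² - 1)` everything is rational, with `u = s₂ / (r₁ r₂)`.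
  generalize Real.sqrt l₁ = r₁ at *
  generalize Real.sqrt l₂ = r₂ at *
  generalize Real.sqrt l₃ = r₃ at *
  generalize Real.sqrt (l₂ ^ 2 - 1) = s₂ at *
  generalize Real.sqrt (l₃ ^ 2 - 1) = s₃ at *
  subst ha hb hc hd hf hr₁ hr₂ hr₃
  refine ⟨s₂ / (r₁ * r₂), s₃ / (r₁ * r₃), ?_, ?_, ?_, ?_, ?_, ?_, ?_⟩ <;> field_simp
  · linear_combination hs₂
  · linear_combination hs₃

theorem stmt_12 (l₂ l₃ : ℝ) (h₂ : 1 ≤ l₂) (h₃ : 1 ≤ l₃)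
    (l₁ a b c d e f : ℝ)
    (hl₁ : l₁ = Real.sqrt (l₂ ^ 2 + l₃ ^ 2 - 1))
    (ha : a = Real.sqrt (l₂ * (l₂ ^ 2 - 1)) / Real.sqrt l₁)
    (hb : b = -Real.sqrt (l₂ - 1 / l₂) * Real.sqrt l₁)
    (hc : c = Real.sqrt (l₃ * (l₃ ^ 2 - 1) / l₁))
    (hd : d = -Real.sqrt (l₃ - 1 / l₃) * Real.sqrt l₁)
    (he : e = 0)
    (hf : f = Real.sqrt ((l₂ ^ 2 - 1) * (l₃ ^ 2 - 1)) / Real.sqrt (l₂ * l₃))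
    (γ : Matrix (Fin 3 × Fin 2) (Fin 3 × Fin 2) ℝ)
    (hγ : γ = threeModeCM l₁ l₂ l₃ (Matrix.diagonal ![a, b])
        (Matrix.diagonal ![c, d]) (Matrix.diagonal ![e, f])) :
    γ * J₃ * γ = J₃ := by
  have hl₁sq : l₁ ^ 2 = l₂ ^ 2 + l₃ ^ 2 - 1 := by
    rw [hl₁, Real.sq_sqrt]
    nlinarith
  have hl₁pos : 0 < l₁ := by
    rw [hl₁]
    exact Real.sqrt_pos.mpr (by nlinarith)
  obtain ⟨u, v, hu, hv, rfl, rfl, rfl, rfl, rfl⟩ :=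
    exists_uv_of_explicit_coeffs h₂ h₃ hl₁pos ha hb hc hd hf
  rw [hγ, he, threeModeCM_diagonal]
  exact quadratureBlockDiag_mul_J₃_mul_self (xBlock_mul_pBlock_eq_one hl₁sq hu hv)
end

section
/- Let λ ≥ 1 and r ≥ 0, and define λ₁' = (λ cosh r + 1)/(λ + cosh r) and λ₂' = √(λ²(cosh²r + 1) + ((3λ⁴ + 6λ² − 1)/(4λ)) cosh r)/(λ + cosh r). Then λ₂' ≥ λ₁'. -/
theorem stmt_15 (lam r : ℝ) (hlam : 1 ≤ lam) (hr : 0 ≤ r)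
    (l₁' l₂' : ℝ)
    (hl₁' : l₁' = (lam * Real.cosh r + 1) / (lam + Real.cosh r))
    (hl₂' : l₂' = Real.sqrt (lam ^ 2 * (Real.cosh r ^ 2 + 1) +
        ((3 * lam ^ 4 + 6 * lam ^ 2 - 1) / (4 * lam)) * Real.cosh r) /
        (lam + Real.cosh r)) :
    l₁' ≤ l₂' := by
  have hc : 1 ≤ Real.cosh r := Real.one_le_cosh r
  have hden : 0 < lam + Real.cosh r := by linarith
  rw [hl₁', hl₂']
  gcongr
  set c := Real.cosh r
  have hnum : 0 ≤ lam * c + 1 := by nlinarith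
  rw [show lam * c + 1 = Real.sqrt ((lam * c + 1) ^ 2) by
    rw [Real.sqrt_sq hnum]]
  apply Real.sqrt_le_sqrt
  have hlpos : (0:ℝ) < lam := by linarith
  rw [div_mul_eq_mul_div, ← sub_le_iff_le_add', le_div_iff₀ (by positivity)]
  have hsq : 1 ≤ lam^2 := by nlinarith
  have h1 : 0 ≤ (3*lam^2+1)*(lam^2-1) := by nlinarith
  nlinarith [mul_nonneg h1 (sub_nonneg.2 hc), mul_nonneg (mul_nonneg hlpos.le hlpos.le) (mul_nonneg hlpos.le (sub_nonneg.2 hlam))]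
end

section
/- Let s ≥ 0, θ = π/4, and r ≥ 0, x > 0 with cosh s ≡ ch s. Given d₂₃^{±'} = −sin(2θ) sinh²(s/2) (x^{±2} cosh r − 1)/(cosh s + x^{±2} cosh r), the product d₂₃^{+'} · d₂₃^{−'} is negative, i.e., det D₂₃' < 0, for all x ∉ [√(1/cosh r), √(cosh r)] with r > 0 and s > 0. -/
theorem stmt_18 (s r x : ℝ) (hs : 0 < s) (hr : 0 < r) (hx : 0 < x)
    (θ : ℝ) (hθ : θ = Real.pi / 4)
    (hxout : x ∉ Set.Icc (Real.sqrt (1 / Real.cosh r)) (Real.sqrt (Real.cosh r)))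
    (dplus dminus : ℝ)
    (hdplus : dplus = -(Real.sin (2 * θ) * Real.sinh (s / 2) ^ 2 *
        (x ^ (2 : ℤ) * Real.cosh r - 1)) / (Real.cosh s + x ^ (2 : ℤ) * Real.cosh r))
    (hdminus : dminus = -(Real.sin (2 * θ) * Real.sinh (s / 2) ^ 2 *
        (x ^ (-2 : ℤ) * Real.cosh r - 1)) / (Real.cosh s + x ^ (-2 : ℤ) * Real.cosh r)) :
    dplus * dminus < 0 := by
  have hC : 1 < Real.cosh r := by
    have := Real.cosh_lt_cosh (x := 0) (y := r)
    simpa [abs_of_pos hr, abs_of_nonneg (le_refl (0:ℝ))] using this.mpr (by simpa [abs_of_pos hr] using hr)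
  have hC0 : (0:ℝ) < Real.cosh r := by linarith
  have hp : 0 < Real.sinh (s/2) ^ 2 := by
    have h : 0 < Real.sinh (s/2) := Real.sinh_pos_iff.mpr (by linarith)
    positivity
  have hsin : Real.sin (2*θ) = 1 := by
    rw [hθ]
    have : 2 * (Real.pi / 4) = Real.pi / 2 := by ring
    rw [this, Real.sin_pi_div_two]
  have ha2 : x ^ (2:ℤ) = x ^ 2 := by
    rw [show (2:ℤ) = ((2:ℕ):ℤ) by rfl, zpow_natCast]
  have ham2 : x ^ (-2:ℤ) = (x ^ 2)⁻¹ := by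
    rw [zpow_neg, show (2:ℤ) = ((2:ℕ):ℤ) by rfl, zpow_natCast]
  have hx2 : (0:ℝ) < x ^ 2 := by positivity
  have hcs : (0:ℝ) < Real.cosh s := Real.cosh_pos s
  have hD1 : 0 < Real.cosh s + x ^ 2 * Real.cosh r := by positivity
  have hD2 : 0 < Real.cosh s + (x ^ 2)⁻¹ * Real.cosh r := by positivity
  rw [hdplus, hdminus, hsin, ha2, ham2, one_mul]
  have hkey : x ^ 2 < 1 / Real.cosh r ∨ Real.cosh r < x ^ 2 := by
    rcases lt_or_ge x (Real.sqrt (1 / Real.cosh r)) with h | h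
    · left
      have := pow_lt_pow_left₀ h hx.le (n := 2) (by norm_num)
      rwa [Real.sq_sqrt (by positivity)] at this
    · right
      have h2 : Real.sqrt (Real.cosh r) < x := by
        by_contra hcon
        exact hxout ⟨h, le_of_not_gt hcon⟩
      have := pow_lt_pow_left₀ h2 (Real.sqrt_nonneg _) (n := 2) (by norm_num)
      rwa [Real.sq_sqrt hC0.le] at this
  rcases hkey with h | h
  · -- x² C < 1, x⁻² C > 1
    have hA : x ^ 2 * Real.cosh r - 1 < 0 := by
      have h1 : x ^ 2 * Real.cosh r < 1 := (lt_div_iff₀ hC0).mp h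
      linarith
    have hB : 0 < (x ^ 2)⁻¹ * Real.cosh r - 1 := by
      have h1 : x ^ 2 * Real.cosh r < 1 := by linarith
      have hlt : 1 / Real.cosh r < 1 := by
        rw [div_lt_one hC0]; exact hC
      have h2 : 1 < (x ^ 2)⁻¹ * Real.cosh r := by
        rw [inv_mul_eq_div, lt_div_iff₀ hx2, one_mul]
        linarith
      linarith
    apply mul_neg_of_pos_of_neg
    · apply div_pos _ hD1; nlinarith
    · apply div_neg_of_neg_of_pos _ hD2; nlinarith
  · -- x² C > 1, x⁻² C < 1
    have hA : 0 < x ^ 2 * Real.cosh r - 1 := by nlinarith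
    have hB : (x ^ 2)⁻¹ * Real.cosh r - 1 < 0 := by
      have h2 : (x ^ 2)⁻¹ * Real.cosh r < 1 := by
        rw [inv_mul_eq_div, div_lt_iff₀ hx2]
        nlinarith
      linarith
    apply mul_neg_of_neg_of_pos
    · apply div_neg_of_neg_of_pos _ hD1; nlinarith
    · apply div_pos _ hD2; nlinarith
end

section
/- Let s ≥ 0, θ ∈ [0, 2π], and define λ₁ = cosh s, λ₂ = sin²θ + cos²θ cosh s, λ₃ = cos²θ + sin²θ cosh s. Then λ₁ + 1 = λ₂ + λ₃, each λᵢ ≥ 1, and for any given λ₂, λ₃ ≥ 1 there exist s ≥ 0 and θ ∈ [0, 2π] realizing these values. -/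
theorem stmt_19 (s θ : ℝ) (hs : 0 ≤ s) (hθ : θ ∈ Set.Icc 0 (2 * Real.pi))
    (l₁ l₂ l₃ : ℝ)
    (hl₁ : l₁ = Real.cosh s)
    (hl₂ : l₂ = Real.sin θ ^ 2 + Real.cos θ ^ 2 * Real.cosh s)
    (hl₃ : l₃ = Real.cos θ ^ 2 + Real.sin θ ^ 2 * Real.cosh s) :
    (l₁ + 1 = l₂ + l₃ ∧ 1 ≤ l₁ ∧ 1 ≤ l₂ ∧ 1 ≤ l₃) ∧
    ∀ μ₂ μ₃ : ℝ, 1 ≤ μ₂ → 1 ≤ μ₃ →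
      ∃ s' θ' : ℝ, 0 ≤ s' ∧ θ' ∈ Set.Icc 0 (2 * Real.pi) ∧
        Real.sin θ' ^ 2 + Real.cos θ' ^ 2 * Real.cosh s' = μ₂ ∧
        Real.cos θ' ^ 2 + Real.sin θ' ^ 2 * Real.cosh s' = μ₃ := by
  have hpyt := Real.sin_sq_add_cos_sq θ
  have hch := Real.one_le_cosh s
  constructor
  · refine ⟨by rw [hl₁, hl₂, hl₃]; nlinarith, by rw [hl₁]; exact hch, ?_, ?_⟩
    · rw [hl₂]; nlinarith [sq_nonneg (Real.cos θ)]
    · rw [hl₃]; nlinarith [sq_nonneg (Real.sin θ)]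
  · intro μ₂ μ₃ h2 h3
    rcases eq_or_lt_of_le (by linarith : (2:ℝ) ≤ μ₂ + μ₃) with hc | hc
    · -- μ₂ = μ₃ = 1
      have hμ2 : μ₂ = 1 := by linarith
      have hμ3 : μ₃ = 1 := by linarith
      refine ⟨0, 0, le_refl 0, ⟨le_refl 0, by positivity⟩, ?_, ?_⟩ <;>
        simp [Real.cosh_zero, hμ2, hμ3]
    · set x : ℝ := μ₂ + μ₃ - 1 with hx
      have hx1 : 1 ≤ x := by linarith
      set s' : ℝ := Real.arsinh (Real.sqrt (x ^ 2 - 1)) with hs'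
      have hcosh : Real.cosh s' = x := by
        rw [hs', Real.cosh_arsinh, Real.sq_sqrt (by nlinarith)]
        rw [show 1 + (x ^ 2 - 1) = x ^ 2 by ring, Real.sqrt_sq (by linarith)]
      have hs'0 : 0 ≤ s' := by rw [hs', ← Real.arsinh_zero]; exact Real.arsinh_le_arsinh.2 (Real.sqrt_nonneg _)
      have hcpos : 0 < x - 1 := by linarith
      have hratio0 : 0 ≤ (μ₂ - 1) / (x - 1) := div_nonneg (by linarith) hcpos.le
      have hratio1 : (μ₂ - 1) / (x - 1) ≤ 1 := by
        rw [div_le_one hcpos]; linarith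
      set θ' : ℝ := Real.arccos (Real.sqrt ((μ₂ - 1) / (x - 1))) with hθ'
      have hcos : Real.cos θ' = Real.sqrt ((μ₂ - 1) / (x - 1)) :=
        Real.cos_arccos (by linarith [Real.sqrt_nonneg ((μ₂ - 1) / (x - 1))])
          (Real.sqrt_le_one.2 hratio1)
      have hcos2 : Real.cos θ' ^ 2 = (μ₂ - 1) / (x - 1) := by
        rw [hcos, Real.sq_sqrt hratio0]
      have hsin2 : Real.sin θ' ^ 2 = (μ₃ - 1) / (x - 1) := by
        have := Real.sin_sq_add_cos_sq θ'
        rw [hcos2] at this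
        field_simp at this ⊢
        linarith
      refine ⟨s', θ', hs'0, ⟨Real.arccos_nonneg _, ?_⟩, ?_, ?_⟩
      · have := Real.arccos_le_pi (Real.sqrt ((μ₂ - 1) / (x - 1)))
        have hπ := Real.pi_pos
        rw [← hθ'] at this; linarith
      · rw [hcosh, hsin2, hcos2]; field_simp; ring
      · rw [hcosh, hsin2, hcos2]; field_simp; ring
end
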